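/- Let A ∈ ℝ^{m×n}, b ∈ ℝ^m, c ∈ ℝ^n, μ>0, ρ>0, x ∈ ℝ^n. Define the SBAL function L(y) = −ρ b^T y + Σ_{i=1}^n h(ρ x_i − c_i + A_i^T y), where h(t) = −ρμ ln s(t) + z(t)²/2 with s(t) = (sqrt(t²+4ρμ)−t)/2, z(t) = (sqrt(t²+4ρμ)+t)/2, and A_i is the i-th column of A. Then L is convex on ℝ^m, with gradient ∇L(y) = A z(y) − ρ b where z(y)_i = z(ρ x_i − c_i + A_i^T y). -/

import Mathlib

/-! With `q = √(t² + 4ρμ)` one has `s + z = q`, `s z = ρμ`, `s' = -s/q` and `z' = z/q`, hence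
`h' = (ρμ + z²)/q = z (s + z)/q = z`, which is increasing; so `h` is convex. `L` is a linear
term plus `h` summed along the affine map `y ↦ ρx - c + Aᵀy`, which gives convexity, and the
chain rule gives its directional derivatives. -/

open Matrix

noncomputable def sbal_s (μ ρ t : ℝ) : ℝ := (Real.sqrt (t ^ 2 + 4 * ρ * μ) - t) / 2
noncomputable def sbal_z (μ ρ t : ℝ) : ℝ := (Real.sqrt (t ^ 2 + 4 * ρ * μ) + t) / 2
noncomputable def sbal_h (μ ρ t : ℝ) : ℝ :=
  -(ρ * μ) * Real.log (sbal_s μ ρ t) + (sbal_z μ ρ t) ^ 2 / 2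

lemma hasDerivAt_sqrt_sq_add {c : ℝ} (hc : 0 < c) (t : ℝ) :
    HasDerivAt (fun t => √(t ^ 2 + c)) (t / √(t ^ 2 + c)) t := by
  have hpos : 0 < t ^ 2 + c := by positivity
  have h := (Real.hasDerivAt_sqrt hpos.ne').comp t (((hasDerivAt_id t).pow 2).add_const c)
  refine h.congr_deriv ?_
  field_simp
  simp

section Sbal

variable {μ ρ : ℝ}

lemma sbal_s_add_sbal_z (t : ℝ) : sbal_s μ ρ t + sbal_z μ ρ t = √(t ^ 2 + 4 * ρ * μ) := by
  unfold sbal_s sbal_z; ring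

lemma sbal_s_mul_sbal_z (hρμ : 0 ≤ ρ * μ) (t : ℝ) : sbal_s μ ρ t * sbal_z μ ρ t = ρ * μ := by
  have hq := Real.sq_sqrt (show 0 ≤ t ^ 2 + 4 * ρ * μ by nlinarith [sq_nonneg t])
  unfold sbal_s sbal_z
  linear_combination hq / 4

lemma abs_lt_sqrt_sq_add_four_mul (hρμ : 0 < ρ * μ) (t : ℝ) : |t| < √(t ^ 2 + 4 * ρ * μ) :=
  (Real.lt_sqrt (abs_nonneg t)).2 (by rw [sq_abs]; linarith)

lemma sqrt_sq_add_four_mul_pos (hρμ : 0 < ρ * μ) (t : ℝ) : 0 < √(t ^ 2 + 4 * ρ * μ) :=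
  (abs_nonneg t).trans_lt (abs_lt_sqrt_sq_add_four_mul hρμ t)

lemma sbal_s_pos (hρμ : 0 < ρ * μ) (t : ℝ) : 0 < sbal_s μ ρ t := by
  have := abs_lt_sqrt_sq_add_four_mul hρμ t
  unfold sbal_s; linarith [le_abs_self t]

lemma sbal_z_pos (hρμ : 0 < ρ * μ) (t : ℝ) : 0 < sbal_z μ ρ t := by
  have := abs_lt_sqrt_sq_add_four_mul hρμ t
  unfold sbal_z; linarith [neg_le_abs t]

lemma hasDerivAt_sbal_z (hρμ : 0 < ρ * μ) (t : ℝ) :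
    HasDerivAt (sbal_z μ ρ) (sbal_z μ ρ t / √(t ^ 2 + 4 * ρ * μ)) t := by
  have hq := sqrt_sq_add_four_mul_pos hρμ t
  have h :=
    ((hasDerivAt_sqrt_sq_add (c := 4 * ρ * μ) (by linarith) t).add (hasDerivAt_id t)).div_const 2
  refine h.congr_deriv ?_
  unfold sbal_z
  field_simp
  ring

lemma hasDerivAt_sbal_s (hρμ : 0 < ρ * μ) (t : ℝ) :
    HasDerivAt (sbal_s μ ρ) (-sbal_s μ ρ t / √(t ^ 2 + 4 * ρ * μ)) t := by
  have hq := sqrt_sq_add_four_mul_pos hρμ t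
  have h :=
    ((hasDerivAt_sqrt_sq_add (c := 4 * ρ * μ) (by linarith) t).sub (hasDerivAt_id t)).div_const 2
  refine h.congr_deriv ?_
  unfold sbal_s
  field_simp
  ring

lemma hasDerivAt_sbal_h (hρμ : 0 < ρ * μ) (t : ℝ) :
    HasDerivAt (sbal_h μ ρ) (sbal_z μ ρ t) t := by
  have hs := sbal_s_pos hρμ t
  have hq := sqrt_sq_add_four_mul_pos hρμ t
  have h := (((hasDerivAt_sbal_s hρμ t).log hs.ne').const_mul (-(ρ * μ))).add
    (((hasDerivAt_sbal_z hρμ t).pow 2).div_const 2)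
  refine h.congr_deriv ?_
  rw [← sbal_s_add_sbal_z] at hq ⊢
  field_simp
  linear_combination (-2) * sbal_s_mul_sbal_z hρμ.le t

lemma strictMono_sbal_z (hρμ : 0 < ρ * μ) : StrictMono (sbal_z μ ρ) :=
  strictMono_of_hasDerivAt_pos (hasDerivAt_sbal_z hρμ) fun t =>
    div_pos (sbal_z_pos hρμ t) (sqrt_sq_add_four_mul_pos hρμ t)

lemma convexOn_sbal_h (hρμ : 0 < ρ * μ) : ConvexOn ℝ Set.univ (sbal_h μ ρ) := by
  have hderiv : deriv (sbal_h μ ρ) = sbal_z μ ρ := funext fun t => (hasDerivAt_sbal_h hρμ t).deriv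
  refine Monotone.convexOn_univ_of_deriv (fun t => (hasDerivAt_sbal_h hρμ t).differentiableAt) ?_
  rw [hderiv]
  exact (strictMono_sbal_z hρμ).monotone

end Sbal

section AffineComposition

variable {ι κ : Type*} [Fintype ι] [Fintype κ] {φ : ℝ → ℝ}

lemma convexOn_sum_comp_apply (hφ : ConvexOn ℝ Set.univ φ) :
    ConvexOn ℝ Set.univ (fun w : κ → ℝ => ∑ j, φ (w j)) := by
  rw [← Finset.sum_fn]
  exact Finset.sum_induction _ (ConvexOn ℝ Set.univ) (fun _ _ => ConvexOn.add)
    (convexOn_const 0 convex_univ) fun j _ =>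
      hφ.comp_linearMap (LinearMap.proj (R := ℝ) (φ := fun _ : κ => ℝ) j)

lemma convexOn_sum_comp_add_mulVec (hφ : ConvexOn ℝ Set.univ φ) (A : Matrix ι κ ℝ) (d : κ → ℝ) :
    ConvexOn ℝ Set.univ (fun y : ι → ℝ => ∑ j, φ (d j + (Aᵀ *ᵥ y) j)) :=
  ((convexOn_sum_comp_apply hφ).translate_right d).comp_linearMap Aᵀ.mulVecLin

lemma hasDerivAt_dotProduct_add_smul (b y v : ι → ℝ) :
    HasDerivAt (fun τ : ℝ => b ⬝ᵥ (y + τ • v)) (b ⬝ᵥ v) 0 := by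
  simp only [dotProduct_add, dotProduct_smul, smul_eq_mul]
  simpa using ((hasDerivAt_id (0 : ℝ)).mul_const (b ⬝ᵥ v)).const_add (b ⬝ᵥ y)

lemma hasDerivAt_sum_comp_add_mulVec_add_smul {φ' : ℝ → ℝ} (hφ : ∀ t, HasDerivAt φ (φ' t) t)
    (A : Matrix ι κ ℝ) (d : κ → ℝ) (y v : ι → ℝ) :
    HasDerivAt (fun τ : ℝ => ∑ j, φ (d j + (Aᵀ *ᵥ (y + τ • v)) j))
      ((A *ᵥ fun j => φ' (d j + (Aᵀ *ᵥ y) j)) ⬝ᵥ v) 0 := by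
  have hline (j : κ) :
      HasDerivAt (fun τ : ℝ => d j + (Aᵀ *ᵥ (y + τ • v)) j) ((Aᵀ *ᵥ v) j) 0 := by
    simp only [mulVec_add, mulVec_smul, Pi.add_apply, Pi.smul_apply, smul_eq_mul, ← add_assoc]
    simpa using ((hasDerivAt_id (0 : ℝ)).mul_const ((Aᵀ *ᵥ v) j)).const_add (d j + (Aᵀ *ᵥ y) j)
  refine (HasDerivAt.fun_sum fun j _ => (hφ _).comp 0 (hline j)).congr_deriv ?_
  rw [dotProduct_comm, dotProduct_mulVec, ← mulVec_transpose, dotProduct_comm]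
  simp [dotProduct]

end AffineComposition

theorem stmt4 {m n : ℕ} (A : Matrix (Fin m) (Fin n) ℝ) (b : Fin m → ℝ) (c x : Fin n → ℝ)
    (μ ρ : ℝ) (hμ : 0 < μ) (hρ : 0 < ρ)
    (L : (Fin m → ℝ) → ℝ)
    (hL : ∀ y, L y = -(ρ * (b ⬝ᵥ y)) + ∑ j, sbal_h μ ρ (ρ * x j - c j + (Aᵀ *ᵥ y) j)) :
    ConvexOn ℝ Set.univ L ∧
    ∀ y v : Fin m → ℝ,
      HasDerivAt (fun τ : ℝ => L (y + τ • v))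
        ((A *ᵥ (fun j => sbal_z μ ρ (ρ * x j - c j + (Aᵀ *ᵥ y) j)) - ρ • b) ⬝ᵥ v) 0 := by
  obtain rfl : L = fun y => -(ρ * (b ⬝ᵥ y)) + ∑ j, sbal_h μ ρ (ρ * x j - c j + (Aᵀ *ᵥ y) j) :=
    funext hL
  have hρμ := mul_pos hρ hμ
  refine ⟨?_, fun y v => ?_⟩
  · exact (LinearMap.convexOn (-(ρ • dotProductBilin ℝ ℝ b)) convex_univ).add
      (convexOn_sum_comp_add_mulVec (convexOn_sbal_h hρμ) A _)
  · refine ((hasDerivAt_dotProduct_add_smul b y v).const_mul ρ).neg.add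
      (hasDerivAt_sum_comp_add_mulVec_add_smul (hasDerivAt_sbal_h hρμ) A _ y v) |>.congr_deriv ?_
    rw [sub_dotProduct, smul_dotProduct, smul_eq_mul]
    ring
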